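/- arXiv:2512.21800 — 2 statements merged into one kernel-verified Lean document; each statement's English description precedes it below -/
import Mathlib

section
/- Let n ≥ 2 and p ≥ 1 be integers. If a graph G has no induced subgraph isomorphic to pK₂ ∪ B for any graph B on n vertices having a vertex of degree n−1 (i.e., a vertex adjacent to all other vertices of B), then χ(G) ≤ C(ω(G)+2p−2, 2p−1) + (n−1)·C(ω(G)+2p−2, 2p), where C(a,b) denotes the binomial coefficient. -/
/-!
Induction on `p`. For `p = 0` the hypothesis says that no vertex has `n - 1` neighbours, so a
greedy colouring uses `n - 1` colours. For `p ≥ 1` fix a maximum clique `v₀, …, v_{ω-1}`; every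
vertex `u` misses some `vᵢ`, and `u` is sorted by the first two indices `i < j` of clique vertices
it misses. The vertices missing a single `vᵢ` form, together with `vᵢ`, an independent set, since
otherwise the clique would grow. The vertices whose first two misses are `i < j` are anticomplete
to the edge `vᵢvⱼ`, so they induce a graph with no induced `(p-1)K₂ ∪ B`; they are complete to
the `j - 1` vertices `vₗ` with `l < j`, `l ≠ i`, so their clique number is at most `ω + 1 - j`.
Hence `χ ≤ ω + ∑_{j<ω} j f(ω + 1 - j)`, where `f` is the bound for `p - 1` (`colorBound`), and
this recursion is solved by the binomial expression of the theorem.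
-/

open SimpleGraph

/-- `pK₂`: the disjoint union of `p` copies of the single-edge graph `K₂`. -/
def pK2 (p : ℕ) : SimpleGraph (Fin p × Fin 2) where
  Adj x y := x.1 = y.1 ∧ x.2 ≠ y.2
  symm := ⟨fun _ _ h => ⟨h.1.symm, h.2.symm⟩⟩
  loopless := ⟨fun _ h => h.2 rfl⟩

open Finset

namespace SimpleGraph

variable {V W U : Type*} {G : SimpleGraph V} {H : SimpleGraph W} {F : SimpleGraph U}

def Embedding.ofIsEmpty [IsEmpty W] : H ↪g G where
  toFun := isEmptyElim
  inj' := isEmptyElim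
  map_rel_iff' {a} := isEmptyElim a

def Embedding.sumElim (f : H ↪g G) (g : F ↪g G) (hne : ∀ a b, f a ≠ g b)
    (hadj : ∀ a b, ¬G.Adj (f a) (g b)) : H ⊕g F ↪g G where
  toFun := Sum.elim f g
  inj' := by
    rintro (a | a) (b | b) h
    · simpa using h
    · exact absurd h (hne a b)
    · exact absurd h.symm (hne b a)
    · simpa using h
  map_rel_iff' {a b} := by
    change G.Adj (Sum.elim f g a) (Sum.elim f g b) ↔ _
    rcases a with a | a <;> rcases b with b | b
    · simp
    · simpa using hadj a b
    · simpa using fun h => hadj b a h.symm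
    · simp

end SimpleGraph

def pK2.succIso (p : ℕ) : pK2 (p + 1) ≃g pK2 p ⊕g pK2 1 where
  toEquiv := (Equiv.prodCongr finSumFinEquiv.symm (Equiv.refl _)).trans
    (Equiv.sumProdDistrib _ _ _)
  map_rel_iff' {a b} := by
    obtain ⟨i, s⟩ := a
    obtain ⟨j, t⟩ := b
    induction i using Fin.addCases <;> induction j using Fin.addCases <;>
      simp [pK2, Fin.ext_iff] <;> omega

def pK2.embeddingOfAdj {V : Type*} {G : SimpleGraph V} {x y : V} (h : G.Adj x y) :
    pK2 1 ↪g G where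
  toFun a := ![x, y] a.2
  inj' := by
    rintro ⟨i, s⟩ ⟨j, t⟩ hst
    fin_cases i; fin_cases j; fin_cases s <;> fin_cases t <;> simp_all [h.ne, h.ne.symm]
  map_rel_iff' {a b} := by
    obtain ⟨i, s⟩ := a
    obtain ⟨j, t⟩ := b
    change G.Adj (![x, y] s) (![x, y] t) ↔ _
    fin_cases i; fin_cases j; fin_cases s <;> fin_cases t <;> simp [pK2, h, h.symm]

theorem exists_two_least {α : Type*} [LinearOrder α] [WellFoundedLT α] {P : α → Prop}
    (h : ∃ a, P a) :
    ∃ i j, i ≤ j ∧ P i ∧ P j ∧ (∀ l < j, l ≠ i → ¬P l) ∧ (i = j → ∀ l ≠ i, ¬P l) := by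
  obtain ⟨i, hi, hmin⟩ := wellFounded_lt.has_min {a | P a} h
  by_cases h' : ∃ l ≠ i, P l
  · obtain ⟨j, ⟨hji, hj⟩, hjmin⟩ := wellFounded_lt.has_min {a | a ≠ i ∧ P a} h'
    exact ⟨i, j, not_lt.mp (hmin j hj), hi, hj, fun l hl hli hPl => hjmin l ⟨hli, hPl⟩ hl,
      fun hij => absurd hij.symm hji⟩
  · push Not at h'
    exact ⟨i, i, le_rfl, hi, hi, fun l _ hli => h' l hli, fun _ => h'⟩

theorem sum_fin_prod_ite_lt_add_ite_eq (m : ℕ) (g : ℕ → ℕ) :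
    ∑ x : Fin m × Fin m, ((if x.1 < x.2 then g x.2 else 0) + if x.1 = x.2 then 1 else 0) =
      m + ∑ j ∈ range m, j * g j := by
  calc _ = ∑ j : Fin m, (j * g j + 1) := by
        rw [Fintype.sum_prod_type_right]
        refine sum_congr rfl fun j _ => ?_
        dsimp only
        rw [sum_add_distrib, ← sum_filter, sum_const, filter_gt_eq_Iio, Fin.card_Iio, sum_ite_eq']
        simp
    _ = m + ∑ j ∈ range m, j * g j := by
        rw [sum_add_distrib, Fin.sum_univ_eq_sum_range (fun j => j * g j)]
        simp [add_comm]

namespace SimpleGraph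

variable {V : Type*} {G : SimpleGraph V}

theorem Colorable.of_induce_compl_singleton [Finite V] {c : ℕ} {v : V}
    (hc : (G.induce {v}ᶜ).Colorable c) (hv : (G.neighborSet v).ncard < c) : G.Colorable c := by
  classical
  obtain ⟨C⟩ := hc
  obtain ⟨a, ha⟩ : ∃ a, ∀ w (hw : G.Adj v w), C ⟨w, hw.ne.symm⟩ ≠ a := by
    by_contra! h
    choose w hw hwa using h
    have : Function.Surjective fun u : G.neighborSet v => C ⟨u, u.2.ne.symm⟩ :=
      fun a => ⟨⟨w a, hw a⟩, hwa a⟩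
    have := Nat.card_le_card_of_surjective _ this
    rw [Nat.card_coe_set_eq, Nat.card_eq_fintype_card, Fintype.card_fin] at this
    omega
  refine ⟨.mk (fun u => if h : u = v then a else C ⟨u, h⟩) fun {x y} hxy => ?_⟩
  by_cases hx : x = v <;> by_cases hy : y = v <;> simp only [hx, hy, dite_true, dite_false]
  · exact (hxy.ne (hx.trans hy.symm)).elim
  · subst hx; exact (ha y hxy).symm
  · subst hy; exact ha x hxy.symm
  · exact C.valid (G := G.induce {v}ᶜ) hxy

theorem colorable_of_forall_ncard_neighborSet_lt [Finite V] {c : ℕ}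
    (h : ∀ v, (G.neighborSet v).ncard < c) : G.Colorable c := by
  induction hV : Nat.card V generalizing V with
  | zero =>
    have := (Nat.card_eq_zero.mp hV).resolve_right (not_infinite_iff_finite.mpr ‹_›)
    exact .of_isEmpty c
  | succ N ih =>
    obtain ⟨v⟩ : Nonempty V := Nat.card_pos_iff.mp (by omega) |>.1
    refine .of_induce_compl_singleton (ih (fun u => ?_) ?_) (h v)
    · calc ((G.induce {v}ᶜ).neighborSet u).ncard
          = (Subtype.val '' (G.induce {v}ᶜ).neighborSet u).ncard :=
            (Set.ncard_image_of_injective _ Subtype.val_injective).symm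
        _ ≤ (G.neighborSet u).ncard := Set.ncard_le_ncard (by rintro _ ⟨w, hw, rfl⟩; exact hw)
        _ < c := h u
    · rw [Nat.card_coe_set_eq, Set.ncard_compl, Set.ncard_singleton, hV]
      rfl

theorem colorable_of_colorable_induce_fiber {ι : Type*} [Fintype ι] (f : V → ι) (c : ι → ℕ)
    (h : ∀ i, (G.induce (f ⁻¹' {i})).Colorable (c i)) : G.Colorable (∑ i, c i) := by
  have C i := (h i).some
  let D : G.Coloring (Σ i, Fin (c i)) := .mk (fun u => ⟨f u, C (f u) ⟨u, rfl⟩⟩)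
    fun {u w} huw heq => by
      obtain ⟨hf, hCeq⟩ := Sigma.mk.inj_iff.mp heq
      have hu : ∀ i (hi : f u = i), C i ⟨u, hi⟩ ≍ C (f u) ⟨u, rfl⟩ := by rintro _ rfl; rfl
      exact (C (f w)).valid (G := G.induce _) (v := ⟨u, hf⟩) (w := ⟨w, rfl⟩) huw
        (eq_of_heq ((hu _ hf).trans hCeq))
  simpa using D.colorable

theorem cliqueFree_cliqueNum_succ [Finite V] : G.CliqueFree (G.cliqueNum + 1) := fun t ht => by
  have := ht.isClique.card_le_cliqueNum
  rw [ht.card_eq] at this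
  omega

theorem cliqueFree_induce_of_forall_adj {S : Set V} {T : Finset V} {a t : ℕ}
    (hT : G.IsNClique t T) (hST : ∀ u ∈ S, ∀ w ∈ T, G.Adj u w) (h : G.CliqueFree (a + t)) :
    (G.induce S).CliqueFree a := by
  classical
  rw [cliqueFree_induce_iff]
  intro C hCS hC
  have hdisj : Disjoint C T :=
    Finset.disjoint_left.mpr fun u hu huT => G.irrefl (hST u (hCS hu) u huT)
  refine h (C ∪ T) ⟨?_, by rw [card_union_of_disjoint hdisj, hC.card_eq, hT.card_eq]⟩
  have : Std.Symm G.Adj := ⟨fun _ _ h => h.symm⟩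
  rw [coe_union, isClique_iff, Set.pairwise_union_of_symm]
  exact ⟨hC.isClique, hT.isClique, fun u hu w hw _ => hST u (hCS hu) w hw⟩

section CliqueDecomposition

variable {m : ℕ} {v : Fin m → V}

theorem isNClique_map_of_pairwise (hv : Pairwise fun i j => G.Adj (v i) (v j))
    (s : Finset (Fin m)) :
    G.IsNClique #s (s.map ⟨v, fun _ _ h => by_contra fun hij => (hv hij).ne h⟩) := by
  refine ⟨?_, card_map _⟩
  rw [coe_map, isClique_iff]
  rintro _ ⟨_, -, rfl⟩ _ ⟨_, -, rfl⟩ hij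
  exact hv fun h => hij (congrArg v h)

theorem exists_not_adj_of_pairwise_of_cliqueFree (hv : Pairwise fun i j => G.Adj (v i) (v j))
    (hm : G.CliqueFree (m + 1)) (u : V) : ∃ l, ¬G.Adj u (v l) := by
  classical
  by_contra! h
  have := (isNClique_map_of_pairwise hv univ).insert fun w hw => by
    obtain ⟨l, -, rfl⟩ := mem_map.mp hw
    exact h l
  rw [card_univ, Fintype.card_fin] at this
  exact hm _ this

def commonNonNeighborSet (G : SimpleGraph V) (x y : V) : Set V :=
  {u | u ≠ x ∧ u ≠ y ∧ ¬G.Adj u x ∧ ¬G.Adj u y}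

def EdgeNonNeighborhoodsColorable (G : SimpleGraph V) (c : ℕ → ℕ) : Prop :=
  ∀ x y, G.Adj x y → ∀ S ⊆ G.commonNonNeighborSet x y, ∀ l,
    (G.induce S).CliqueFree (l + 1) → (G.induce S).Colorable (c l)

theorem colorable_induce_of_forall_adj_lt (hv : Pairwise fun i j => G.Adj (v i) (v j))
    {k : ℕ} (hk : G.CliqueFree (k + 1)) {c : ℕ → ℕ} (hc : G.EdgeNonNeighborhoodsColorable c)
    {a b : Fin m} (hab : a < b) {S : Set V}
    (hS : ∀ u ∈ S, ¬G.Adj u (v a) ∧ ¬G.Adj u (v b) ∧ ∀ l < b, l ≠ a → G.Adj u (v l)) :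
    (G.induce S).Colorable (c (k + 1 - b)) := by
  have hadj : G.Adj (v a) (v b) := hv hab.ne
  refine hc (v a) (v b) hadj S (fun u hu => ?_) _ ?_
  · obtain ⟨hua, hub, -⟩ := hS u hu
    exact ⟨fun h => hub (h ▸ hadj), fun h => hua (h ▸ hadj.symm), hua, hub⟩
  · refine cliqueFree_induce_of_forall_adj (isNClique_map_of_pairwise hv ((Iio b).erase a))
      (fun u hu w hw => ?_) (hk.mono ?_)
    · obtain ⟨l, hl, rfl⟩ := mem_map.mp hw
      obtain ⟨hla, hlb⟩ := mem_erase.mp hl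
      exact (hS u hu).2.2 l (mem_Iio.mp hlb) hla
    · rw [card_erase_of_mem (mem_Iio.mpr hab), Fin.card_Iio]
      have : (a : ℕ) < b := hab
      omega

theorem colorable_one_induce_of_forall_adj_ne (hv : Pairwise fun i j => G.Adj (v i) (v j))
    (hm : G.CliqueFree (m + 1)) {a : Fin m} {S : Set V}
    (hS : ∀ u ∈ S, ∀ l ≠ a, G.Adj u (v l)) : (G.induce S).Colorable 1 := by
  rw [colorable_one_iff, ← cliqueFree_two]
  refine cliqueFree_induce_of_forall_adj (isNClique_map_of_pairwise hv (univ.erase a))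
    (fun u hu w hw => ?_) (hm.mono ?_)
  · obtain ⟨l, hl, rfl⟩ := mem_map.mp hw
    exact hS u hu l (mem_erase.mp hl).1
  · rw [card_erase_of_mem (mem_univ a), card_univ, Fintype.card_fin]
    have := a.pos
    omega

theorem colorable_of_pairwise_adj_of_cliqueFree (hv : Pairwise fun i j => G.Adj (v i) (v j))
    (hm : G.CliqueFree (m + 1)) {k : ℕ} (hmk : m ≤ k) {c : ℕ → ℕ}
    (hc : G.EdgeNonNeighborhoodsColorable c) :
    G.Colorable (m + ∑ j ∈ range m, j * c (k + 1 - j)) := by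
  choose i j hij hi hj hlt heq using fun u =>
    exists_two_least (exists_not_adj_of_pairwise_of_cliqueFree hv hm u)
  rw [← sum_fin_prod_ite_lt_add_ite_eq]
  refine colorable_of_colorable_induce_fiber (fun u => (i u, j u)) _ fun ⟨a, b⟩ => ?_
  have hpart : ∀ {u}, u ∈ (fun u => (i u, j u)) ⁻¹' {(a, b)} ↔ i u = a ∧ j u = b := by simp
  rcases lt_trichotomy a b with hab | rfl | hab
  · simpa [hab, hab.ne] using colorable_induce_of_forall_adj_lt hv (hm.mono (by omega)) hc hab
      fun u hu => by
        obtain ⟨rfl, rfl⟩ := hpart.mp hu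
        exact ⟨hi u, hj u, fun l hl hla => not_not.mp (hlt u l hl hla)⟩
  · simpa using colorable_one_induce_of_forall_adj_ne (a := a) hv hm fun u hu l hl => by
      obtain ⟨hiu, hju⟩ := hpart.mp hu
      exact not_not.mp (heq u (hiu.trans hju.symm) l (hiu ▸ hl))
  · simp only [hab.not_gt, hab.ne', if_false, add_zero, colorable_zero_iff]
    refine ⟨fun ⟨u, hu⟩ => ?_⟩
    obtain ⟨rfl, rfl⟩ := hpart.mp hu
    exact (hij u).not_gt hab

end CliqueDecomposition

theorem colorable_of_cliqueFree [Finite V] {k : ℕ} (hk : G.CliqueFree (k + 1)) {c : ℕ → ℕ}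
    (hc : G.EdgeNonNeighborhoodsColorable c) :
    G.Colorable (k + ∑ j ∈ range k, j * c (k + 1 - j)) := by
  obtain ⟨s, hs⟩ := G.exists_isNClique_cliqueNum
  have hsk : #s ≤ k := by
    by_contra! h
    exact hk.mono h s (hs.card_eq ▸ hs)
  let v : Fin #s → V := fun i => s.equivFin.symm i
  have hv : Pairwise fun i j => G.Adj (v i) (v j) := fun i j hij =>
    hs.isClique (s.equivFin.symm i).2 (s.equivFin.symm j).2 fun h =>
      hij (s.equivFin.symm.injective (Subtype.ext h))
  exact (colorable_of_pairwise_adj_of_cliqueFree hv (hs.card_eq ▸ cliqueFree_cliqueNum_succ)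
    hsk hc).mono (add_le_add hsk (sum_le_sum_of_subset (range_subset_range.mpr hsk)))

end SimpleGraph

def colorBound (n : ℕ) : ℕ → ℕ → ℕ
  | 0, _ => n - 1
  | p + 1, k => k + ∑ j ∈ range k, j * colorBound n p (k + 1 - j)

theorem sum_range_succ_mul_sub (F : ℕ → ℕ) (k : ℕ) :
    ∑ j ∈ range (k + 1), j * F (k + 2 - j) =
      ∑ j ∈ range k, j * F (k + 1 - j) + ∑ j ∈ range k, F (j + 2) := by
  rw [sum_range_succ', zero_mul, add_zero, ← sum_range_reflect (fun j => F (j + 2)),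
    ← sum_add_distrib]
  refine sum_congr rfl fun j hj => ?_
  have : j < k := mem_range.mp hj
  rw [show k + 2 - (j + 1) = k + 1 - j by omega, show k - 1 - j + 2 = k + 1 - j by omega]
  ring

theorem add_sum_range_mul_eq {F Φ Ψ : ℕ → ℕ} (hΦ₀ : Φ 0 = 0) (hΨ₀ : Ψ 0 = 1)
    (hΦ : ∀ k, Φ (k + 1) = Φ k + Ψ k) (hΨ : ∀ k, Ψ (k + 1) = Ψ k + F (k + 2)) (k : ℕ) :
    k + ∑ j ∈ range k, j * F (k + 1 - j) = Φ k := by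
  have hsum : ∀ k, 1 + ∑ j ∈ range k, F (j + 2) = Ψ k := by
    intro k
    induction k with
    | zero => simp [hΨ₀]
    | succ k ih => rw [sum_range_succ, ← add_assoc, ih, hΨ]
  induction k with
  | zero => simp [hΦ₀]
  | succ k ih => rw [sum_range_succ_mul_sub, hΦ, ← ih, ← hsum]; ring

theorem colorBound_succ (n q k : ℕ) :
    colorBound n (q + 1) k =
      (k + 2 * q).choose (2 * q + 1) + (n - 1) * (k + 2 * q).choose (2 * q + 2) := by
  revert k
  induction q with
  | zero =>
    refine add_sum_range_mul_eq (Ψ := fun k => 1 + (n - 1) * k) ?_ ?_ (fun k => ?_) (fun k => ?_)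
    · simp
    · simp
    · simp only [mul_zero, add_zero, zero_add, Nat.choose_one_right, Nat.choose_succ_succ' k 1]
      ring
    · simp only [colorBound]
      ring
  | succ q ih =>
    simp only [show 2 * (q + 1) = 2 * q + 2 by ring]
    refine add_sum_range_mul_eq (Ψ := fun k =>
        (k + (2 * q + 2)).choose (2 * q + 2) + (n - 1) * (k + (2 * q + 2)).choose (2 * q + 3))
      ?_ ?_ (fun k => ?_) (fun k => ?_)
    · simp [Nat.choose_eq_zero_of_lt]
    · simp
    · rw [add_right_comm, Nat.choose_succ_succ' _ (2 * q + 2), Nat.choose_succ_succ' _ (2 * q + 3)]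
      ring
    · rw [ih, add_right_comm, Nat.choose_succ_succ' _ (2 * q + 1),
        Nat.choose_succ_succ' _ (2 * q + 2), show k + 2 + 2 * q = k + (2 * q + 2) by ring]
      ring

namespace SimpleGraph

section MatchingConeFree

variable {V : Type} {G : SimpleGraph V}

/-- `G` has no induced `pK₂ ∪ B` with `B` an `n`-vertex graph having a dominating vertex. -/
def MatchingConeFree (n p : ℕ) (G : SimpleGraph V) : Prop :=
  ∀ (W : Type) [Fintype W] (B : SimpleGraph W), Fintype.card W = n →
    (∃ v : W, ∀ w : W, w ≠ v → B.Adj v w) → IsEmpty ((pK2 p ⊕g B) ↪g G)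

theorem MatchingConeFree.induce {n p : ℕ} (hG : MatchingConeFree n (p + 1) G) {x y : V}
    (hxy : G.Adj x y) {S : Set V} (hS : S ⊆ G.commonNonNeighborSet x y) :
    MatchingConeFree n p (G.induce S) := by
  refine fun W _ B hW hB => ⟨fun e => (hG W B hW hB).false ?_⟩
  have hfar : ∀ a, (e a : V) ∈ G.commonNonNeighborSet x y := fun a => hS (e a).2
  -- `(p+1)K₂ ∪ B ≃ (pK₂ ∪ B) ∪ K₂`, and the extra `K₂` goes to the edge `xy`.
  let iso : pK2 (p + 1) ⊕g B ≃g (pK2 p ⊕g B) ⊕g pK2 1 :=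
    (Iso.sumCongr (pK2.succIso p) .refl).trans
      (Iso.sumAssoc.trans ((Iso.sumCongr .refl Iso.sumComm).trans Iso.sumAssoc.symm))
  refine .comp (.sumElim ((Embedding.induce S).comp e) (pK2.embeddingOfAdj hxy) ?_ ?_)
    iso.toRelEmbedding
  all_goals
    rintro a ⟨i, s⟩
    obtain ⟨hx, hy, hax, hay⟩ := hfar a
    fin_cases s <;> simpa [pK2.embeddingOfAdj]

theorem MatchingConeFree.ncard_neighborSet_lt [Finite V] {n : ℕ} (hG : MatchingConeFree n 0 G)
    (hn : 1 ≤ n) (v : V) : (G.neighborSet v).ncard < n - 1 := by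
  by_contra! hv
  obtain ⟨t, htv, ht⟩ := Set.exists_subset_card_eq hv
  have hvt : v ∉ t := fun h => G.irrefl (htv h)
  let W := ↥(insert v t)
  let _ : Fintype W := Fintype.ofFinite W
  refine (hG W (G.induce (insert v t)) ?_ ⟨⟨v, t.mem_insert v⟩, ?_⟩).false
    (.sumElim .ofIsEmpty (Embedding.induce _) isEmptyElim isEmptyElim)
  · rw [Fintype.card_eq_nat_card, Nat.card_coe_set_eq, Set.ncard_insert_of_notMem hvt, ht]
    omega
  · rintro ⟨w, hw⟩ hwv
    exact htv ((Set.mem_insert_iff.mp hw).resolve_left fun h => hwv (Subtype.ext h))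

theorem MatchingConeFree.colorable [Finite V] {n p k : ℕ} (hG : MatchingConeFree n p G)
    (hn : 1 ≤ n) (hk : G.CliqueFree (k + 1)) : G.Colorable (colorBound n p k) := by
  induction p generalizing V k with
  | zero => exact colorable_of_forall_ncard_neighborSet_lt (hG.ncard_neighborSet_lt hn)
  | succ p ih => exact colorable_of_cliqueFree hk fun x y hxy S hS l hl => ih (hG.induce hxy hS) hl

end MatchingConeFree

end SimpleGraph

theorem stmt_4 (n p : ℕ) (hn : 2 ≤ n) (hp : 1 ≤ p)
    (V : Type) [Fintype V] (G : SimpleGraph V)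
    (hG : ∀ (W : Type) [Fintype W] (B : SimpleGraph W), Fintype.card W = n →
      (∃ v : W, ∀ w : W, w ≠ v → B.Adj v w) → IsEmpty ((pK2 p ⊕g B) ↪g G)) :
    G.chromaticNumber ≤
      ((Nat.choose (G.cliqueNum + 2 * p - 2) (2 * p - 1) +
        (n - 1) * Nat.choose (G.cliqueNum + 2 * p - 2) (2 * p) : ℕ) : ℕ∞) := by
  obtain ⟨q, rfl⟩ : ∃ q, p = q + 1 := ⟨p - 1, by omega⟩
  have hcol := MatchingConeFree.colorable (k := G.cliqueNum) hG (by omega) cliqueFree_cliqueNum_succ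
  rw [colorBound_succ] at hcol
  rw [chromaticNumber_le_iff_colorable, show G.cliqueNum + 2 * (q + 1) - 2 = G.cliqueNum + 2 * q by
    omega, show 2 * (q + 1) - 1 = 2 * q + 1 by omega, mul_add_one]
  exact hcol
end

section
/- For every integer p ≥ 1, every pK₂-free graph G satisfies χ(G) ≤ C(ω(G)−1+2(p−1), 2(p−1)), where C(a,b) denotes the binomial coefficient. -/
open SimpleGraph

/-!
Induction on `p`. Fix a maximum clique `k 0, …, k (ω - 1)`; by maximality every vertex has a
non-neighbour on it. The vertices missing only `k i` form an independent set. The vertices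
whose first two non-neighbours on the clique are `k i` and `k j` (`i < j`) are adjacent to the
other `j - 1` clique vertices below `k j`, so they induce a subgraph of clique number at most
`ω - j + 1`; it is `(p - 1)K₂`-free, since together with the edge `k i k j` a `(p - 1)K₂` would
give a `pK₂`. Colouring each class separately and using the induction hypothesis gives
`ω + ∑_{j < ω} j * C(ω - j + 2p - 4, 2p - 4) = C(ω + 2p - 3, 2p - 2)` colours.
-/

open Finset

theorem Nat.sum_range_mul_choose_sub_add (q : ℕ) :
    ∀ n, ∑ j ∈ range (n + 1), j * (n - j + q).choose q = (n + q + 1).choose (q + 2)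
  | 0 => by simp
  | n + 1 => by
    have hockey : ∑ j ∈ range (n + 1), (n - j + q).choose q = (n + q + 1).choose (q + 1) := by
      rw [← sum_range_add_choose, ← sum_range_reflect]
      refine sum_congr rfl fun j hj => ?_
      have := mem_range.mp hj
      congr 2
      omega
    calc ∑ j ∈ range (n + 2), j * (n + 1 - j + q).choose q
        = ∑ j ∈ range (n + 1), (j * (n - j + q).choose q + (n - j + q).choose q) := by
          rw [sum_range_succ']
          simp [add_mul]
      _ = (n + 1 + q + 1).choose (q + 2) := by
          rw [sum_add_distrib, Nat.sum_range_mul_choose_sub_add q n, hockey,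
            show n + 1 + q + 1 = (n + q + 1) + 1 by omega,
            Nat.choose_succ_succ' (n + q + 1) (q + 1)]
          ring

theorem exists_lt_forall_lt_imp_eq {α : Type*} [LinearOrder α] [WellFoundedLT α] {P : α → Prop}
    {a b : α} (hab : a ≠ b) (ha : P a) (hb : P b) :
    ∃ i j, i < j ∧ P i ∧ P j ∧ ∀ l < j, P l → l = i := by
  obtain ⟨j, ⟨i, hij, hi, hj⟩, hmin⟩ :=
    wellFounded_lt.has_min {j | ∃ i < j, P i ∧ P j} <| by
      rcases hab.lt_or_gt with h | h
      exacts [⟨b, a, h, ha, hb⟩, ⟨a, b, h, hb, ha⟩]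
  refine ⟨i, j, hij, hi, hj, fun l hlj hl => ?_⟩
  by_contra hli
  rcases lt_or_gt_of_ne hli with h | h
  exacts [hmin i ⟨l, h, hl, hi⟩ hij, hmin l ⟨i, h, hi, hl⟩ hlj]

namespace SimpleGraph

variable {V : Type*} {G : SimpleGraph V}

theorem colorable_sum_of_cover {ι : Type*} [Fintype ι] {A : ι → Set V} (hA : ∀ v, ∃ i, v ∈ A i)
    {n : ι → ℕ} (hcol : ∀ i, (G.induce (A i)).Colorable (n i)) : G.Colorable (∑ i, n i) := by
  choose c hc using hA
  have f : ∀ i, (G.induce (A i)).Coloring (Fin (n i)) := fun i => (hcol i).some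
  have hvalid {i j : ι} {v w : V} (hv : v ∈ A i) (hw : w ∈ A j) (hvw : G.Adj v w)
      (h : (⟨i, f i ⟨v, hv⟩⟩ : Σ i, Fin (n i)) = ⟨j, f j ⟨w, hw⟩⟩) : False := by
    obtain ⟨rfl, h⟩ := Sigma.mk.inj_iff.mp h
    exact (f i).valid (show (G.induce (A i)).Adj ⟨v, hv⟩ ⟨w, hw⟩ from hvw) (eq_of_heq h)
  simpa using (Coloring.mk (fun v => (⟨c v, f (c v) ⟨v, hc v⟩⟩ : Σ i, Fin (n i)))
    fun hvw h => hvalid _ _ hvw h).colorable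

theorem colorable_one_of_cliqueNum_le_one [Finite V] (h : G.cliqueNum ≤ 1) : G.Colorable 1 := by
  refine colorable_one_iff.mpr (eq_bot_iff_forall_not_adj.mpr fun u v huv => ?_)
  classical
  have hclique : G.IsClique ({u, v} : Finset V) := by
    rw [coe_pair]; exact isClique_pair.mpr fun _ => huv
  have := IsClique.card_le_cliqueNum (tc := hclique)
  rw [card_pair huv.ne] at this
  omega

theorem cliqueNum_induce_add_card_le [Finite V] {W : Type*} (f : completeGraph W ↪g G)
    (s : Finset W) {A : Set V} (hA : ∀ a ∈ A, ∀ l ∈ s, G.Adj a (f l)) :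
    (G.induce A).cliqueNum + #s ≤ G.cliqueNum := by
  classical
  obtain ⟨C, hC⟩ := (G.induce A).exists_isNClique_cliqueNum
  set D := C.map (Function.Embedding.subtype (· ∈ A)) ∪ s.map f.toEmbedding
  have hdisj : Disjoint (C.map (Function.Embedding.subtype (· ∈ A))) (s.map f.toEmbedding) := by
    rw [Finset.disjoint_left]
    rintro _ ha hs
    obtain ⟨a, -, rfl⟩ := mem_map.mp ha
    obtain ⟨l, hl, hla⟩ := mem_map.mp hs
    exact (hA a a.2 l hl).ne hla.symm
  have hD : G.IsClique (D : Set V) := by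
    intro x hx y hy hxy
    simp only [D, coe_union, coe_map, Set.mem_union, Set.mem_image, mem_coe] at hx hy
    rcases hx with ⟨a, ha, rfl⟩ | ⟨l, hl, rfl⟩ <;> rcases hy with ⟨b, hb, rfl⟩ | ⟨m, hm, rfl⟩
    · exact hC.isClique ha hb (fun h => hxy (congrArg _ h))
    · exact hA a a.2 m hm
    · exact (hA b b.2 l hl).symm
    · exact f.map_adj_iff.mpr fun h => hxy (congrArg _ h)
  calc (G.induce A).cliqueNum + #s = #D := by
        rw [card_union_of_disjoint hdisj, card_map, card_map, hC.card_eq]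
    _ ≤ G.cliqueNum := IsClique.card_le_cliqueNum (tc := hD)

@[simp]
theorem pK2_adj {p : ℕ} {x y : Fin p × Fin 2} : (pK2 p).Adj x y ↔ x.1 = y.1 ∧ x.2 ≠ y.2 := Iff.rfl

theorem injective_of_adj_iff_pK2_adj {p : ℕ} {f : Fin p × Fin 2 → V}
    (hf : ∀ x y, G.Adj (f x) (f y) ↔ (pK2 p).Adj x y) : Function.Injective f := by
  rintro ⟨i, s⟩ ⟨j, t⟩ h
  have hpartner : (pK2 p).Adj (i, s) (i, s + 1) := ⟨rfl, by simp⟩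
  obtain ⟨hji, hts⟩ : (pK2 p).Adj (j, t) (i, s + 1) := (hf _ _).mp (h ▸ (hf _ _).mpr hpartner)
  subst hji
  fin_cases s <;> fin_cases t <;> simp_all

theorem nonempty_pK2_succ_embedding {p : ℕ} (e : pK2 p ↪g G) {a b : V} (hab : G.Adj a b)
    (ha : ∀ x, ¬G.Adj (e x) a) (hb : ∀ x, ¬G.Adj (e x) b) : Nonempty (pK2 (p + 1) ↪g G) := by
  let f : Fin (p + 1) × Fin 2 → V :=
    fun x => Fin.lastCases (![a, b] x.2) (fun i => e (i, x.2)) x.1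
  have hf : ∀ x y, G.Adj (f x) (f y) ↔ (pK2 (p + 1)).Adj x y := by
    rintro ⟨i, s⟩ ⟨j, t⟩
    induction i using Fin.lastCases <;> induction j using Fin.lastCases <;>
      fin_cases s <;> fin_cases t <;>
      simp [f, hab, hab.symm, ha, hb, G.adj_comm a, G.adj_comm b, (Fin.castSucc_ne_last _).symm]
  exact ⟨⟨⟨f, injective_of_adj_iff_pK2_adj hf⟩, hf _ _⟩⟩

theorem isEmpty_pK2_embedding_induce {p : ℕ} {A : Set V} {a b : V} (hab : G.Adj a b)
    (ha : ∀ v ∈ A, ¬G.Adj v a) (hb : ∀ v ∈ A, ¬G.Adj v b) (hG : IsEmpty (pK2 (p + 1) ↪g G)) :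
    IsEmpty (pK2 p ↪g G.induce A) :=
  ⟨fun e => hG.elim (nonempty_pK2_succ_embedding ((Embedding.induce A).comp e) hab
    (fun x => ha _ (e x).2) (fun x => hb _ (e x).2)).some⟩

theorem exists_not_adj_of_cliqueNum_le [Finite V] {n : ℕ} (k : completeGraph (Fin n) ↪g G)
    (hn : G.cliqueNum ≤ n) (u : V) : ∃ l, ¬G.Adj u (k l) := by
  by_contra! h
  have hle := cliqueNum_induce_add_card_le k univ (A := {u}) fun _ hv l _ => hv ▸ h l
  have hpos := IsClique.card_le_cliqueNum (G := G.induce {u}) (t := {⟨u, rfl⟩})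
    (tc := by simp)
  simp only [card_univ, Fintype.card_fin, card_singleton] at hle hpos
  omega

section CliqueClasses

variable {n : ℕ} (k : completeGraph (Fin n) ↪g G)

def singleClass (i : Fin n) : Set V := {u | ∀ l ≠ i, G.Adj u (k l)}

/-- `i : Fin j` stands for the clique index `i < j`. -/
def pairClass (j : Fin n) (i : Fin j) : Set V :=
  {u | ¬G.Adj u (k j) ∧ ¬G.Adj u (k (Fin.castLE j.is_lt.le i)) ∧
    ∀ l ≠ i, G.Adj u (k (Fin.castLE j.is_lt.le l))}

theorem exists_mem_singleClass_or_pairClass {u : V} (hu : ∃ l, ¬G.Adj u (k l)) :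
    (∃ i, u ∈ singleClass k i) ∨ ∃ j i, u ∈ pairClass k j i := by
  obtain ⟨i₀, hi₀⟩ := hu
  by_cases h : ∀ l ≠ i₀, G.Adj u (k l)
  · exact .inl ⟨i₀, h⟩
  push Not at h
  obtain ⟨l₀, hl₀, hnl₀⟩ := h
  obtain ⟨i, j, hij, hi, hj, hmin⟩ :=
    exists_lt_forall_lt_imp_eq (P := fun l => ¬G.Adj u (k l)) hl₀ hnl₀ hi₀
  refine .inr ⟨j, ⟨i, hij⟩, hj, hi, fun l hl => ?_⟩
  by_contra hnl
  have := congrArg Fin.val (hmin _ l.is_lt hnl)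
  exact hl (Fin.ext this)

theorem colorable_one_induce_singleClass [Finite V] (hn : G.cliqueNum ≤ n) (i : Fin n) :
    (G.induce (singleClass k i)).Colorable 1 := by
  have := cliqueNum_induce_add_card_le k (univ.erase i) (A := singleClass k i)
    fun _ hu l hl => hu l (ne_of_mem_erase hl)
  rw [card_erase_of_mem (mem_univ i), card_univ, Fintype.card_fin] at this
  exact colorable_one_of_cliqueNum_le_one (by have := i.is_lt; omega)

theorem cliqueNum_induce_pairClass_add_le [Finite V] (j : Fin n) (i : Fin j) :
    (G.induce (pairClass k j i)).cliqueNum + (j - 1) ≤ G.cliqueNum := by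
  simpa using cliqueNum_induce_add_card_le
    (k.comp (Embedding.completeGraph (Fin.castLEEmb j.is_lt.le))) (univ.erase i)
    fun _ hu l hl => hu.2.2 l (ne_of_mem_erase hl)

theorem isEmpty_pK2_embedding_induce_pairClass {p : ℕ} (hG : IsEmpty (pK2 (p + 1) ↪g G))
    (j : Fin n) (i : Fin j) : IsEmpty (pK2 p ↪g G.induce (pairClass k j i)) :=
  isEmpty_pK2_embedding_induce (k.map_adj_iff.mpr (Fin.ne_of_lt i.is_lt))
    (fun _ hu => hu.2.1) (fun _ hu => hu.1) hG

end CliqueClasses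

theorem colorable_of_isEmpty_pK2_succ_succ_embedding [Finite V] {p : ℕ}
    (ih : ∀ A : Set V, IsEmpty (pK2 (p + 1) ↪g G.induce A) →
      (G.induce A).Colorable (((G.induce A).cliqueNum - 1 + 2 * p).choose (2 * p)))
    (hG : IsEmpty (pK2 (p + 2) ↪g G)) :
    G.Colorable ((G.cliqueNum - 1 + 2 * (p + 1)).choose (2 * (p + 1))) := by
  obtain ⟨K, hK⟩ := G.exists_isNClique_cliqueNum
  let k : completeGraph (Fin G.cliqueNum) ↪g G := topEmbeddingOfNotCliqueFree fun h => h K hK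
  let A : Fin G.cliqueNum ⊕ (Σ j : Fin G.cliqueNum, Fin j) → Set V :=
    Sum.elim (singleClass k) fun x => pairClass k x.1 x.2
  let c : Fin G.cliqueNum ⊕ (Σ j : Fin G.cliqueNum, Fin j) → ℕ :=
    Sum.elim 1 fun x => (G.cliqueNum - x.1 + 2 * p).choose (2 * p)
  have hcover (u : V) : ∃ x, u ∈ A x :=
    (exists_mem_singleClass_or_pairClass k (exists_not_adj_of_cliqueNum_le k le_rfl u)).elim
      (fun ⟨i, hi⟩ => ⟨.inl i, hi⟩) fun ⟨j, i, h⟩ => ⟨.inr ⟨j, i⟩, h⟩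
  have hcol : ∀ x, (G.induce (A x)).Colorable (c x)
    | .inl i => colorable_one_induce_singleClass k le_rfl i
    | .inr ⟨j, i⟩ => (ih _ (isEmpty_pK2_embedding_induce_pairClass k hG j i)).mono <|
        Nat.choose_le_choose _ <| show _ ≤ G.cliqueNum - j + 2 * p by
          have := cliqueNum_induce_pairClass_add_le k j i
          have := i.is_lt
          omega
  have hsum : ∑ x, c x = (G.cliqueNum + 2 * p + 1).choose (2 * p + 2) := by
    simp only [c, Fintype.sum_sum_type, Fintype.sum_sigma, Sum.elim_inl, Sum.elim_inr,
      Pi.one_apply, sum_const, card_univ, Fintype.card_fin, smul_eq_mul,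
      Fin.sum_univ_eq_sum_range (fun j => j * (G.cliqueNum - j + 2 * p).choose (2 * p)),
      ← Nat.sum_range_mul_choose_sub_add, sum_range_succ, Nat.sub_self, zero_add, Nat.choose_self]
    ring
  exact (colorable_sum_of_cover hcover hcol).mono (hsum ▸ Nat.choose_le_choose _ (by omega))

theorem colorable_choose_of_isEmpty_pK2_embedding [Finite V] (p : ℕ) (G : SimpleGraph V)
    (hG : IsEmpty (pK2 (p + 1) ↪g G)) :
    G.Colorable ((G.cliqueNum - 1 + 2 * p).choose (2 * p)) := by
  induction p generalizing V with
  | zero =>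
    rw [mul_zero, Nat.choose_zero_right]
    refine colorable_one_iff.mpr (eq_bot_iff_forall_not_adj.mpr fun u v huv => hG.elim ?_)
    exact (nonempty_pK2_succ_embedding (RelEmbedding.ofIsEmpty _ _) huv
      isEmptyElim isEmptyElim).some
  | succ p ih =>
    exact colorable_of_isEmpty_pK2_succ_succ_embedding (fun A hA => ih (G.induce A) hA) hG

end SimpleGraph

theorem stmt_5 (p : ℕ) (hp : 1 ≤ p) (V : Type) [Fintype V] (G : SimpleGraph V)
    (hG : IsEmpty (pK2 p ↪g G)) :
    G.chromaticNumber ≤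
      (Nat.choose (G.cliqueNum - 1 + 2 * (p - 1)) (2 * (p - 1)) : ℕ∞) := by
  obtain ⟨q, rfl⟩ : ∃ q, p = q + 1 := ⟨p - 1, by omega⟩
  simpa using (colorable_choose_of_isEmpty_pK2_embedding q G hG).chromaticNumber_le
end
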